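/- arXiv:1109.5343 — 4 statements merged into one kernel-verified Lean document; each statement's English description precedes it below -/
import Mathlib

section
/- Let f(z) be a function holomorphic on a neighborhood of the closed unit disk in the Riemann sphere except for a simple pole at z=0 (i.e. z·f(z) is holomorphic on the closed disk). If the restriction of f to the unit circle is nonvanishing, then the winding number of the curve t ↦ f(e^{2πit}) around 0 equals −1 if and only if f has no zeros in the punctured closed unit disk and the residue of f at 0 is nonzero. -/
/-!
Near the unit circle `f = g / z`, so `f'/f = g'/g - 1/z` and the winding number is `N - 1`, where
`2πi N = ∮ g'/g`. Writing `g = (z - a)^k h` at a zero `a` of order `k` in the disk adds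
`k / (z - a)` to the logarithmic derivative, i.e. `k` to `N`, and removes `a` from the (finite)
zero set; once no zeros are left, Cauchy's theorem gives `0`. So `N` counts the zeros of `g` in the
closed disk with multiplicity.
-/

open Metric Complex Filter Set Topology Function

section

variable {𝕜 : Type*} [NontriviallyNormedField 𝕜]

theorem logDeriv_sub_pow_mul {h : 𝕜 → 𝕜} {a z : 𝕜} (k : ℕ) (hz : z ≠ a)
    (hh : DifferentiableAt 𝕜 h z) (hhz : h z ≠ 0) :
    logDeriv (fun w => (w - a) ^ k * h w) z = k * (z - a)⁻¹ + logDeriv h z := by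
  have hza : z - a ≠ 0 := sub_ne_zero.2 hz
  rw [logDeriv_mul (f := fun w => (w - a) ^ k) z (pow_ne_zero k hza) hhz (by fun_prop) hh,
    logDeriv_fun_pow (by fun_prop), logDeriv_apply, deriv_sub_const, deriv_id'', one_div]

theorem logDeriv_eq_logDeriv_sub_inv {f g : 𝕜 → 𝕜} {z : 𝕜} (hfg : f =ᶠ[𝓝 z] fun w => g w / w)
    (hz : z ≠ 0) (hgz : g z ≠ 0) (hg : DifferentiableAt 𝕜 g z) :
    logDeriv f z = logDeriv g z - z⁻¹ := by
  rw [(logDeriv_congr_nhds hfg).eq_of_nhds,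
    logDeriv_div (g := fun w => w) z hgz hz hg differentiableAt_fun_id, logDeriv_id', one_div]

theorem forall_ne_zero_iff_of_eq_div_id {f g : 𝕜 → 𝕜} {s : Set 𝕜} (h0 : (0 : 𝕜) ∈ s)
    (hfg : ∀ z ∈ s, z ≠ 0 → f z = g z / z) :
    (∀ z ∈ s, g z ≠ 0) ↔ (∀ z ∈ s, z ≠ 0 → f z ≠ 0) ∧ g 0 ≠ 0 := by
  refine ⟨fun hg => ⟨fun z hz hz0 => ?_, hg 0 h0⟩, fun ⟨hf, hg0⟩ z hz => ?_⟩
  · rw [hfg z hz hz0]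
    exact div_ne_zero (hg z hz) hz0
  · rcases eq_or_ne z 0 with rfl | hz0
    · exact hg0
    · exact fun hgz => hf z hz hz0 (by rw [hfg z hz hz0, hgz, zero_div])

theorem sep_sub_pow_mul_eq_zero_diff_singleton {h : 𝕜 → 𝕜} {a : 𝕜} (ha : h a ≠ 0) (k : ℕ)
    (s : Set 𝕜) : {z ∈ s | (z - a) ^ k * h z = 0} \ {a} = {z ∈ s | h z = 0} := by
  ext z
  by_cases hza : z = a
  · simp [hza, ha]
  · simp [hza, sub_ne_zero.2 hza]

end

namespace DifferentiableOn

variable {U : Set ℂ} {g : ℂ → ℂ}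

/-- The cofactor is the iterated `dslope` of `g` at `a`, which is holomorphic on all of `U`. -/
theorem exists_eq_sub_pow_mul (hU : IsOpen U) (hg : DifferentiableOn ℂ g U) {a : ℂ} (ha : a ∈ U)
    (hg0 : ¬∀ᶠ z in 𝓝 a, g z = 0) :
    ∃ (k : ℕ) (h : ℂ → ℂ), DifferentiableOn ℂ h U ∧ h a ≠ 0 ∧ g = fun z => (z - a) ^ k * h z := by
  obtain ⟨p, hp⟩ := hg.analyticAt (hU.mem_nhds ha)
  have hdiff : ∀ n, DifferentiableOn ℂ ((swap dslope a)^[n] g) U := by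
    intro n
    induction n with
    | zero => exact hg
    | succ n ih =>
      rw [iterate_succ_apply']
      exact (differentiableOn_dslope (hU.mem_nhds ha)).2 ih
  exact ⟨p.order, _, hdiff _, hp.iterate_dslope_fslope_ne_zero (mt hp.locally_zero_iff.2 hg0),
    funext hp.eq_pow_order_mul_iterate_dslope⟩

theorem differentiableOn_logDeriv (hU : IsOpen U) (hg : DifferentiableOn ℂ g U) :
    DifferentiableOn ℂ (logDeriv g) (U ∩ g ⁻¹' {0}ᶜ) :=
  ((hg.deriv hU).mono inter_subset_left).div (hg.mono inter_subset_left) fun _ hz => hz.2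

theorem circleIntegrable_logDeriv {c : ℂ} {R : ℝ} (hR : 0 ≤ R) (hU : IsOpen U)
    (hS : sphere c R ⊆ U) (hg : DifferentiableOn ℂ g U) (hne : ∀ z ∈ sphere c R, g z ≠ 0) :
    CircleIntegrable (logDeriv g) c R :=
  ContinuousOn.circleIntegrable hR <|
    (hg.differentiableOn_logDeriv hU).continuousOn.mono fun z hz => ⟨hS hz, hne z hz⟩

end DifferentiableOn

section ClosedDisk

variable {U : Set ℂ} {g : ℂ → ℂ} {c : ℂ} {R : ℝ}

theorem circleIntegral_logDeriv_eq_zero (hR : 0 ≤ R) (hU : IsOpen U) (hK : closedBall c R ⊆ U)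
    (hg : DifferentiableOn ℂ g U) (hne : ∀ z ∈ closedBall c R, g z ≠ 0) :
    ∮ z in C(c, R), logDeriv g z = 0 := by
  have hV : IsOpen (U ∩ g ⁻¹' {0}ᶜ) := hg.continuousOn.isOpen_inter_preimage hU isOpen_compl_singleton
  have hKV : closedBall c R ⊆ U ∩ g ⁻¹' {0}ᶜ := fun z hz => ⟨hK hz, hne z hz⟩
  have hd := hg.differentiableOn_logDeriv hU
  exact circleIntegral_eq_zero_of_differentiable_on_off_countable hR countable_empty
    (hd.continuousOn.mono hKV)
    fun z hz => hd.differentiableAt (hV.mem_nhds (hKV (ball_subset_closedBall hz.1)))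

theorem circleIntegral_logDeriv_sub_pow_mul (hU : IsOpen U) (hS : sphere c R ⊆ U)
    (hg : DifferentiableOn ℂ g U) (hne : ∀ z ∈ sphere c R, g z ≠ 0) {a : ℂ} (ha : a ∈ ball c R)
    (k : ℕ) :
    ∮ z in C(c, R), logDeriv (fun w => (w - a) ^ k * g w) z =
      2 * Real.pi * I * k + ∮ z in C(c, R), logDeriv g z := by
  have hR : 0 ≤ R := (pos_of_mem_ball ha).le
  have hsa : ∀ z ∈ sphere c R, z ≠ a := fun z hz => sphere_disjoint_ball.ne_of_mem hz ha
  have hinv : CircleIntegrable (fun z => (k : ℂ) * (z - a)⁻¹) c R :=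
    ContinuousOn.circleIntegrable hR <| continuousOn_const.mul <|
      (continuousOn_id.sub continuousOn_const).inv₀ fun z hz => sub_ne_zero.2 (hsa z hz)
  rw [circleIntegral.integral_congr hR fun z hz => logDeriv_sub_pow_mul k (hsa z hz)
      (hg.differentiableAt (hU.mem_nhds (hS hz))) (hne z hz),
    circleIntegral.integral_add hinv (hg.circleIntegrable_logDeriv hR hU hS hne),
    circleIntegral.integral_const_mul, circleIntegral.integral_sub_inv_of_mem_ball ha, mul_comm]

theorem circleIntegral_logDeriv_of_eq_div_id {f : ℂ → ℂ} (hU : IsOpen U) (hS : sphere c R ⊆ U)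
    (hg : DifferentiableOn ℂ g U) (hfg : ∀ z ∈ U, z ≠ 0 → f z = g z / z)
    (hne : ∀ z ∈ sphere c R, g z ≠ 0) (h0 : (0 : ℂ) ∈ ball c R) :
    ∮ z in C(c, R), logDeriv f z = (∮ z in C(c, R), logDeriv g z) - 2 * Real.pi * I := by
  have hR : 0 ≤ R := (pos_of_mem_ball h0).le
  have hs0 : ∀ z ∈ sphere c R, z ≠ 0 := fun z hz => sphere_disjoint_ball.ne_of_mem hz h0
  have hlog : EqOn (logDeriv f) (fun z => logDeriv g z - z⁻¹) (sphere c R) := fun z hz =>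
    logDeriv_eq_logDeriv_sub_inv
      (eventually_of_mem ((hU.inter isOpen_ne).mem_nhds ⟨hS hz, hs0 z hz⟩)
        fun w hw => hfg w hw.1 hw.2)
      (hs0 z hz) (hne z hz) (hg.differentiableAt (hU.mem_nhds (hS hz)))
  have hinv : CircleIntegrable (fun z : ℂ => z⁻¹) c R :=
    ContinuousOn.circleIntegrable hR (continuousOn_inv₀.mono hs0)
  rw [circleIntegral.integral_congr hR hlog,
    circleIntegral.integral_sub (hg.circleIntegrable_logDeriv hR hU hS hne) hinv]
  simpa using circleIntegral.integral_sub_inv_of_mem_ball h0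

theorem not_eventually_eq_zero_of_mem_closedBall (hR : 0 ≤ R) (hU : IsOpen U)
    (hK : closedBall c R ⊆ U) (hg : DifferentiableOn ℂ g U) (hne : ∀ z ∈ sphere c R, g z ≠ 0)
    {a : ℂ} (ha : a ∈ closedBall c R) : ¬∀ᶠ z in 𝓝 a, g z = 0 := fun h0 => by
  obtain ⟨x, hx⟩ := (NormedSpace.sphere_nonempty (x := c)).2 hR
  exact hne x hx <| ((hg.analyticOnNhd hU).mono hK).eqOn_zero_of_preconnected_of_eventuallyEq_zero
    (isConnected_closedBall hR).isPreconnected ha h0 (sphere_subset_closedBall hx)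

theorem finite_setOf_mem_closedBall_eq_zero (hR : 0 ≤ R) (hU : IsOpen U)
    (hK : closedBall c R ⊆ U) (hg : DifferentiableOn ℂ g U) (hne : ∀ z ∈ sphere c R, g z ≠ 0) :
    Set.Finite {z ∈ closedBall c R | g z = 0} := by
  obtain ⟨x, hx⟩ := (NormedSpace.sphere_nonempty (x := c)).2 hR
  have hcod := ((hg.analyticOnNhd hU).mono hK).preimage_zero_mem_codiscreteWithin (hne x hx)
    (sphere_subset_closedBall hx) (isConnected_closedBall hR)
  exact ((isCompact_closedBall c R).finite_sdiff_of_mem_codiscreteWithin hcod).subset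
    fun z hz => ⟨hz.1, fun hgz => hgz hz.2⟩

theorem exists_circleIntegral_logDeriv_eq_two_pi_I_mul_nat (hR : 0 ≤ R) (hU : IsOpen U) (hK : closedBall c R ⊆ U) (hg : DifferentiableOn ℂ g U)
    (hne : ∀ z ∈ sphere c R, g z ≠ 0) :
    ∃ m : ℕ, ∮ z in C(c, R), logDeriv g z = 2 * Real.pi * I * m ∧
      (m = 0 ↔ ∀ z ∈ closedBall c R, g z ≠ 0) := by
  obtain ⟨n, hn⟩ : ∃ n, {z ∈ closedBall c R | g z = 0}.ncard = n := ⟨_, rfl⟩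
  induction n using Nat.strong_induction_on generalizing g with
  | _ n ih =>
  have hfin := finite_setOf_mem_closedBall_eq_zero hR hU hK hg hne
  rcases {z ∈ closedBall c R | g z = 0}.eq_empty_or_nonempty with hZ | ⟨a, haK, hga⟩
  · have hnz : ∀ z ∈ closedBall c R, g z ≠ 0 := fun z hz hgz =>
      hZ.subset ⟨hz, hgz⟩
    exact ⟨0, by simpa using circleIntegral_logDeriv_eq_zero hR hU hK hg hnz, by simpa using hnz⟩
  have hS := sphere_subset_closedBall.trans hK
  have ha : a ∈ ball c R := by
    rw [← closedBall_sdiff_sphere]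
    exact ⟨haK, fun haS => hne a haS hga⟩
  obtain ⟨k, h, hh, hha, rfl⟩ := hg.exists_eq_sub_pow_mul hU (hK haK)
    (not_eventually_eq_zero_of_mem_closedBall hR hU hK hg hne haK)
  have hk : k ≠ 0 := by
    rintro rfl
    simp [hha] at hga
  have hhne : ∀ z ∈ sphere c R, h z ≠ 0 := fun z hz hhz => hne z hz (by simp [hhz])
  have haZ : a ∈ {z ∈ closedBall c R | (z - a) ^ k * h z = 0} := ⟨haK, hga⟩
  have hcard : {z ∈ closedBall c R | h z = 0}.ncard = n - 1 := by
    rw [← sep_sub_pow_mul_eq_zero_diff_singleton hha, ncard_sdiff_singleton_of_mem haZ, hn]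
  have hpos : 0 < n := hn ▸ (ncard_pos hfin).2 ⟨a, haZ⟩
  obtain ⟨m, hm, -⟩ := ih (n - 1) (by omega) hh hhne hcard
  refine ⟨k + m, ?_, iff_of_false (by omega) fun h0 => h0 a haK hga⟩
  rw [circleIntegral_logDeriv_sub_pow_mul hU hS hh hhne ha, hm]
  push_cast
  ring

end ClosedDisk

/-- Winding number (= logarithmic residue) of a function `f` holomorphic near the closed
unit disk except for a simple pole at `0` (i.e. `f z = g z / z` with `g` holomorphic),
nonvanishing on the unit circle, equals `-1` iff `f` has no zeros in the punctured closed
disk and the residue `g 0` of `f` at `0` is nonzero. -/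
theorem winding_number_neg_one_iff
    (f g : ℂ → ℂ) (U : Set ℂ) (hU : IsOpen U)
    (hsub : closedBall (0 : ℂ) 1 ⊆ U)
    (hg : DifferentiableOn ℂ g U)
    (hfg : ∀ z ∈ U, z ≠ 0 → f z = g z / z)
    (hne : ∀ z : ℂ, ‖z‖ = 1 → f z ≠ 0) :
    (2 * Real.pi * Complex.I)⁻¹ * (∮ z in C(0, 1), deriv f z / f z) = -1 ↔
      ((∀ z ∈ closedBall (0 : ℂ) 1, z ≠ 0 → f z ≠ 0) ∧ g 0 ≠ 0) := by
  have hS : sphere (0 : ℂ) 1 ⊆ U := sphere_subset_closedBall.trans hsub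
  have hgne : ∀ z ∈ sphere (0 : ℂ) 1, g z ≠ 0 := fun z hz hgz => by
    have hz0 : z ≠ 0 := ne_zero_of_mem_unit_sphere ⟨z, hz⟩
    exact hne z (mem_sphere_zero_iff_norm.1 hz) (by rw [hfg z (hS hz) hz0, hgz, zero_div])
  obtain ⟨m, hm, hm0⟩ := exists_circleIntegral_logDeriv_eq_two_pi_I_mul_nat zero_le_one hU hsub hg hgne
  change _ * (∮ z in C(0, 1), logDeriv f z) = -1 ↔ _
  rw [circleIntegral_logDeriv_of_eq_div_id hU hS hg hfg hgne (mem_ball_self one_pos), hm,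
    ← mul_sub_one, inv_mul_cancel_left₀ two_pi_I_ne_zero, sub_eq_neg_self, Nat.cast_eq_zero, hm0]
  exact forall_ne_zero_iff_of_eq_div_id (mem_closedBall_self zero_le_one)
    fun z hz => hfg z (hsub hz)
end

section
/- Let λ, λ̄ be functions of variables (z,x) and let Q = Q(λ, λ̄), Q̃ = Q̃(λ, λ̄) be smooth functions of λ and λ̄. Suppose λ and λ̄ evolve under two time variables t and t̃ by ∂λ/∂t̃ = {−Q̃₋, λ}, ∂λ̄/∂t̃ = {Q̃₊, λ̄} and ∂λ/∂t = {−Q₋, λ}, ∂λ̄/∂t = {Q₊, λ̄}, where Q = Q₊ + Q₋ is any decomposition into two parts and similarly for Q̃. Then the Zakharov–Shabat equation holds: ∂Q/∂t̃ − ∂Q̃/∂t + {Q₊, Q̃₊} − {Q₋, Q̃₋} = 0. -/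
/-- the space of variables `(z, x, t, t̃)` -/
abbrev E4 : Type := ℂ × ℂ × ℂ × ℂ

noncomputable def pdZ (f : E4 → ℂ) (p : E4) : ℂ := (fderiv ℂ f p) (1, 0, 0, 0)
noncomputable def pdX (f : E4 → ℂ) (p : E4) : ℂ := (fderiv ℂ f p) (0, 1, 0, 0)
noncomputable def pdT (f : E4 → ℂ) (p : E4) : ℂ := (fderiv ℂ f p) (0, 0, 1, 0)
noncomputable def pdS (f : E4 → ℂ) (p : E4) : ℂ := (fderiv ℂ f p) (0, 0, 0, 1)

/-- the bracket `{f,g} = z f_z g_x - z g_z f_x` -/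
noncomputable def br4 (f g : E4 → ℂ) (p : E4) : ℂ :=
  p.1 * pdZ f p * pdX g p - p.1 * pdZ g p * pdX f p

/-!
Write `Q = q(λ, λ̄)` and `Q̃ = q̃(λ, λ̄)`. By the chain rule and the Leibniz rule for the bracket, the
Lax equations for `t̃` give `∂Q/∂t̃ = {Q̃₊, Q} - Q_λ {Q̃, λ} = {Q̃₊, Q} + Q_λ Q̃_λ̄ {λ, λ̄}`, and those
for `t` give `∂Q̃/∂t = -{Q₋, Q̃} + Q̃_λ̄ {Q, λ̄} = -{Q₋, Q̃} + Q̃_λ̄ Q_λ {λ, λ̄}`. The `{λ, λ̄}` terms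
cancel in the difference, and what is left, `{Q̃₊, Q} + {Q₋, Q̃}`, equals `{Q₋, Q̃₋} - {Q₊, Q̃₊}`
by bilinearity and antisymmetry of the bracket.
-/

theorem fderiv_comp_prodMk_apply {𝕜 E : Type*} [NontriviallyNormedField 𝕜] [NormedAddCommGroup E]
    [NormedSpace 𝕜 E] {q : 𝕜 × 𝕜 → 𝕜} {f g : E → 𝕜} {x : E}
    (hq : DifferentiableAt 𝕜 q (f x, g x)) (hf : DifferentiableAt 𝕜 f x)
    (hg : DifferentiableAt 𝕜 g x) (v : E) :
    fderiv 𝕜 (fun y => q (f y, g y)) x v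
      = fderiv 𝕜 q (f x, g x) (1, 0) * fderiv 𝕜 f x v
        + fderiv 𝕜 q (f x, g x) (0, 1) * fderiv 𝕜 g x v := by
  have hpair : (fderiv 𝕜 f x v, fderiv 𝕜 g x v)
      = fderiv 𝕜 f x v • ((1 : 𝕜), (0 : 𝕜)) + fderiv 𝕜 g x v • ((0 : 𝕜), (1 : 𝕜)) := by
    simp
  rw [fderiv_fun_comp x hq (hf.prodMk hg), hf.fderiv_prodMk hg, ContinuousLinearMap.comp_apply,
    ContinuousLinearMap.prod_apply, hpair, map_add, map_smul, map_smul, smul_eq_mul, smul_eq_mul,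
    mul_comm, mul_comm (fderiv 𝕜 g x v)]

section Bracket

variable {f g h : E4 → ℂ} {p : E4}

theorem br4_skew (f g : E4 → ℂ) (p : E4) : br4 f g p = -br4 g f p := by
  unfold br4
  ring

theorem br4_self (f : E4 → ℂ) (p : E4) : br4 f f p = 0 :=
  sub_self _

theorem br4_neg_left (f g : E4 → ℂ) (p : E4) : br4 (fun x => -f x) g p = -br4 f g p := by
  simp only [br4, pdZ, pdX, fderiv_fun_neg, neg_apply]
  ring

theorem br4_add_left (hf : DifferentiableAt ℂ f p) (hg : DifferentiableAt ℂ g p) :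
    br4 (fun x => f x + g x) h p = br4 f h p + br4 g h p := by
  simp only [br4, pdZ, pdX, fderiv_fun_add hf hg, add_apply]
  ring

theorem br4_add_right (hg : DifferentiableAt ℂ g p) (hh : DifferentiableAt ℂ h p) :
    br4 f (fun x => g x + h x) p = br4 f g p + br4 f h p := by
  rw [br4_skew, br4_add_left hg hh, br4_skew g, br4_skew h]
  ring

theorem br4_comp_prodMk_right {q : ℂ × ℂ → ℂ} {lam lamb : E4 → ℂ}
    (hq : DifferentiableAt ℂ q (lam p, lamb p)) (hlam : DifferentiableAt ℂ lam p)
    (hlamb : DifferentiableAt ℂ lamb p) (f : E4 → ℂ) :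
    br4 f (fun x => q (lam x, lamb x)) p
      = fderiv ℂ q (lam p, lamb p) (1, 0) * br4 f lam p
        + fderiv ℂ q (lam p, lamb p) (0, 1) * br4 f lamb p := by
  simp only [br4, pdZ, pdX, fderiv_comp_prodMk_apply hq hlam hlamb]
  ring

end Bracket

section LaxFlow

/- A Lax flow in the direction `v`: `∂_v λ = {-A₋, λ}`, `∂_v λ̄ = {A₊, λ̄}` with `A₊ + A₋ = a(λ, λ̄)`. -/
variable {lam lamb Ap Am : E4 → ℂ} {q a : ℂ × ℂ → ℂ} {p v : E4}
  (hq : DifferentiableAt ℂ q (lam p, lamb p)) (ha : DifferentiableAt ℂ a (lam p, lamb p))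
  (hlam : DifferentiableAt ℂ lam p) (hlamb : DifferentiableAt ℂ lamb p)
  (hAp : DifferentiableAt ℂ Ap p) (hAm : DifferentiableAt ℂ Am p)
  (hdec : ∀ x, Ap x + Am x = a (lam x, lamb x))
  (hflow : fderiv ℂ lam p v = br4 (fun x => -Am x) lam p)
  (hflowb : fderiv ℂ lamb p v = br4 Ap lamb p)
include hq ha hlam hlamb hAp hAm hdec hflow hflowb

theorem fderiv_comp_prodMk_eq_br4_plus_of_lax :
    fderiv ℂ (fun x => q (lam x, lamb x)) p v
      = br4 Ap (fun x => q (lam x, lamb x)) p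
        + fderiv ℂ q (lam p, lamb p) (1, 0) * fderiv ℂ a (lam p, lamb p) (0, 1)
          * br4 lam lamb p := by
  have hA : br4 Ap lam p + br4 Am lam p = -fderiv ℂ a (lam p, lamb p) (0, 1) * br4 lam lamb p := by
    rw [← br4_add_left hAp hAm, funext hdec, br4_skew, br4_comp_prodMk_right ha hlam hlamb,
      br4_self]
    ring
  rw [fderiv_comp_prodMk_apply hq hlam hlamb, hflow, hflowb, br4_neg_left,
    br4_comp_prodMk_right hq hlam hlamb]
  linear_combination (-fderiv ℂ q (lam p, lamb p) (1, 0)) * hA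

theorem fderiv_comp_prodMk_eq_br4_minus_of_lax :
    fderiv ℂ (fun x => q (lam x, lamb x)) p v
      = -br4 Am (fun x => q (lam x, lamb x)) p
        + fderiv ℂ q (lam p, lamb p) (0, 1) * fderiv ℂ a (lam p, lamb p) (1, 0)
          * br4 lam lamb p := by
  have hA : br4 Ap lamb p + br4 Am lamb p = fderiv ℂ a (lam p, lamb p) (1, 0) * br4 lam lamb p := by
    rw [← br4_add_left hAp hAm, funext hdec, br4_skew, br4_comp_prodMk_right ha hlam hlamb,
      br4_self, br4_skew lamb lam]
    ring
  rw [fderiv_comp_prodMk_apply hq hlam hlamb, hflow, hflowb, br4_neg_left,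
    br4_comp_prodMk_right hq hlam hlamb]
  linear_combination fderiv ℂ q (lam p, lamb p) (0, 1) * hA

end LaxFlow

/-- The Zakharov–Shabat equation: if `λ, λ̄` evolve in the times `t, t̃` via the Lax
equations with generators `Q = Q₊ + Q₋` and `Q̃ = Q̃₊ + Q̃₋` (arbitrary decompositions),
then `∂Q/∂t̃ − ∂Q̃/∂t + {Q₊, Q̃₊} − {Q₋, Q̃₋} = 0`. -/
theorem zakharov_shabat
    (lam lamb Qp Qm Qtp Qtm : E4 → ℂ) (q qt : ℂ × ℂ → ℂ)
    (hlam : ContDiff ℂ ⊤ lam) (hlamb : ContDiff ℂ ⊤ lamb)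
    (hQp : ContDiff ℂ ⊤ Qp) (hQm : ContDiff ℂ ⊤ Qm)
    (hQtp : ContDiff ℂ ⊤ Qtp) (hQtm : ContDiff ℂ ⊤ Qtm)
    (hq : ContDiff ℂ ⊤ q) (hqt : ContDiff ℂ ⊤ qt)
    (hdec : ∀ p, Qp p + Qm p = q (lam p, lamb p))
    (hdect : ∀ p, Qtp p + Qtm p = qt (lam p, lamb p))
    (ht1 : ∀ p, pdT lam p = br4 (fun x => -(Qm x)) lam p)
    (ht2 : ∀ p, pdT lamb p = br4 Qp lamb p)
    (hs1 : ∀ p, pdS lam p = br4 (fun x => -(Qtm x)) lam p)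
    (hs2 : ∀ p, pdS lamb p = br4 Qtp lamb p) :
    ∀ p, pdS (fun x => q (lam x, lamb x)) p - pdT (fun x => qt (lam x, lamb x)) p
        + br4 Qp Qtp p - br4 Qm Qtm p = 0 := by
  intro p
  have hd : ∀ {F : Type} [NormedAddCommGroup F] [NormedSpace ℂ F] {f : F → ℂ} (x : F),
      ContDiff ℂ ⊤ f → DifferentiableAt ℂ f x := fun x hf => hf.differentiable (by simp) x
  have hS := fderiv_comp_prodMk_eq_br4_plus_of_lax (hd _ hq) (hd _ hqt) (hd p hlam) (hd p hlamb)
    (hd p hQtp) (hd p hQtm) hdect (hs1 p) (hs2 p)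
  have hT := fderiv_comp_prodMk_eq_br4_minus_of_lax (hd _ hqt) (hd _ hq) (hd p hlam) (hd p hlamb)
    (hd p hQp) (hd p hQm) hdec (ht1 p) (ht2 p)
  have hQ : br4 Qtp (fun x => q (lam x, lamb x)) p = br4 Qtp Qp p + br4 Qtp Qm p := by
    rw [← funext hdec, br4_add_right (hd p hQp) (hd p hQm)]
  have hQt : br4 Qm (fun x => qt (lam x, lamb x)) p = br4 Qm Qtp p + br4 Qm Qtm p := by
    rw [← funext hdect, br4_add_right (hd p hQtp) (hd p hQtm)]
  unfold pdS pdT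
  rw [hS, hT, hQ, hQt, br4_skew Qtp Qp, br4_skew Qtp Qm]
  ring
end

section
/- Define Q_{v,p}(λ,λ̄) = −((−λ)^p/p!)(log(1+λ̄/λ) + c_p − 1) + (λ̄^p/p!)(log(λ̄(λ+λ̄)) − c_p − 1) and Q_{u,p}(λ,λ̄) = λ̄^{p+1}/(p+1)!, where c_p is the p-th harmonic number. Then for p ≥ 1, (λ ∂/∂λ + λ̄ ∂/∂λ̄) Q_{v,p} = p·Q_{v,p} + 2·Q_{u,p−1}. -/
/-!
`Q_{v,p}` is built from `(-λ)^p` and `λ̄^p`, which are homogeneous of degree `p`, and from two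
logarithms: `log (1 + λ̄/λ)` is homogeneous of degree `0`, while `log (λ̄ (λ + λ̄))` is the logarithm
of a quadratic form, so the Euler operator `λ ∂_λ + λ̄ ∂_λ̄` sends it to the constant `2`. The Leibniz
rule for the Euler operator then gives `p Q_{v,p}` plus the defect `2 λ̄^p/p! = 2 Q_{u,p-1}`.
-/

/-- the `p`-th harmonic number `c_p = 1 + 1/2 + ⋯ + 1/p` -/
noncomputable def harm (p : ℕ) : ℂ := ∑ k ∈ Finset.range p, (1 : ℂ) / (k + 1)

/-- `Q_{v,p} = −((−λ)^p/p!)(log(1+λ̄/λ)+c_p−1) + (λ̄^p/p!)(log(λ̄(λ+λ̄))−c_p−1)` -/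
noncomputable def Qv (p : ℕ) (x y : ℂ) : ℂ :=
  -((-x) ^ p / (Nat.factorial p : ℂ)) * (Complex.log (1 + y / x) + harm p - 1)
    + (y ^ p / (Nat.factorial p : ℂ)) * (Complex.log (y * (x + y)) - harm p - 1)

/-- `Q_{u,p} = λ̄^{p+1}/(p+1)!` -/
noncomputable def Qu (p : ℕ) (x y : ℂ) : ℂ := y ^ (p + 1) / (Nat.factorial (p + 1) : ℂ)

open Complex

section Euler

variable {𝕜 : Type*} [NontriviallyNormedField 𝕜]

/-- The Euler operator `x ∂ₓ + y ∂ᵧ` applied to `f` at `(x, y)` exists and takes the value `e`. -/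
def HasEulerDerivAt (f : 𝕜 → 𝕜 → 𝕜) (e x y : 𝕜) : Prop :=
  ∃ a b, HasDerivAt (fun t => f t y) a x ∧ HasDerivAt (f x) b y ∧ x * a + y * b = e

variable {f g : 𝕜 → 𝕜 → 𝕜} {e e' x y : 𝕜}

theorem HasEulerDerivAt.deriv_eq (h : HasEulerDerivAt f e x y) :
    x * deriv (fun t => f t y) x + y * deriv (fun t => f x t) y = e := by
  obtain ⟨a, b, ha, hb, rfl⟩ := h
  rw [ha.deriv, hb.deriv]

theorem HasEulerDerivAt.congr_value (h : HasEulerDerivAt f e x y) (he : e = e') :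
    HasEulerDerivAt f e' x y :=
  he ▸ h

theorem hasEulerDerivAt_const (c : 𝕜) : HasEulerDerivAt (fun _ _ => c) 0 x y :=
  ⟨0, 0, hasDerivAt_const _ _, hasDerivAt_const _ _, by ring⟩

theorem hasEulerDerivAt_fst : HasEulerDerivAt (fun x _ => x) x x y :=
  ⟨1, 0, hasDerivAt_id x, hasDerivAt_const _ _, by ring⟩

theorem hasEulerDerivAt_snd : HasEulerDerivAt (fun _ y => y) y x y :=
  ⟨0, 1, hasDerivAt_const _ _, hasDerivAt_id y, by ring⟩

theorem HasEulerDerivAt.add (hf : HasEulerDerivAt f e x y) (hg : HasEulerDerivAt g e' x y) :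
    HasEulerDerivAt (fun x y => f x y + g x y) (e + e') x y := by
  obtain ⟨a, b, ha, hb, rfl⟩ := hf
  obtain ⟨a', b', ha', hb', rfl⟩ := hg
  exact ⟨a + a', b + b', ha.add ha', hb.add hb', by ring⟩

theorem HasEulerDerivAt.sub (hf : HasEulerDerivAt f e x y) (hg : HasEulerDerivAt g e' x y) :
    HasEulerDerivAt (fun x y => f x y - g x y) (e - e') x y := by
  obtain ⟨a, b, ha, hb, rfl⟩ := hf
  obtain ⟨a', b', ha', hb', rfl⟩ := hg
  exact ⟨a - a', b - b', ha.sub ha', hb.sub hb', by ring⟩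

theorem HasEulerDerivAt.neg (hf : HasEulerDerivAt f e x y) :
    HasEulerDerivAt (fun x y => -f x y) (-e) x y := by
  obtain ⟨a, b, ha, hb, rfl⟩ := hf
  exact ⟨-a, -b, ha.neg, hb.neg, by ring⟩

theorem HasEulerDerivAt.mul (hf : HasEulerDerivAt f e x y) (hg : HasEulerDerivAt g e' x y) :
    HasEulerDerivAt (fun x y => f x y * g x y) (e * g x y + f x y * e') x y := by
  obtain ⟨a, b, ha, hb, rfl⟩ := hf
  obtain ⟨a', b', ha', hb', rfl⟩ := hg
  exact ⟨_, _, ha.mul ha', hb.mul hb', by ring⟩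

theorem HasEulerDerivAt.div (hf : HasEulerDerivAt f e x y) (hg : HasEulerDerivAt g e' x y)
    (hgxy : g x y ≠ 0) :
    HasEulerDerivAt (fun x y => f x y / g x y) ((e * g x y - f x y * e') / g x y ^ 2) x y := by
  obtain ⟨a, b, ha, hb, rfl⟩ := hf
  obtain ⟨a', b', ha', hb', rfl⟩ := hg
  exact ⟨_, _, ha.fun_div ha' hgxy, hb.fun_div hb' hgxy, by field_simp; ring⟩

theorem HasEulerDerivAt.div_const (hf : HasEulerDerivAt f e x y) (c : 𝕜) :
    HasEulerDerivAt (fun x y => f x y / c) (e / c) x y := by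
  obtain ⟨a, b, ha, hb, rfl⟩ := hf
  exact ⟨a / c, b / c, ha.div_const c, hb.div_const c, by ring⟩

theorem HasEulerDerivAt.pow (hf : HasEulerDerivAt f e x y) (n : ℕ) :
    HasEulerDerivAt (fun x y => f x y ^ n) (n * f x y ^ (n - 1) * e) x y := by
  obtain ⟨a, b, ha, hb, rfl⟩ := hf
  exact ⟨_, _, ha.fun_pow n, hb.fun_pow n, by ring⟩

end Euler

theorem HasEulerDerivAt.clog {f : ℂ → ℂ → ℂ} {e x y : ℂ} (hf : HasEulerDerivAt f e x y)
    (hslit : f x y ∈ slitPlane) :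
    HasEulerDerivAt (fun x y => log (f x y)) (e / f x y) x y := by
  obtain ⟨a, b, ha, hb, rfl⟩ := hf
  exact ⟨_, _, ha.clog hslit, hb.clog hslit, by ring⟩

theorem hasEulerDerivAt_log_one_add_div {x y : ℂ} (hx : x ≠ 0) (hslit : 1 + y / x ∈ slitPlane) :
    HasEulerDerivAt (fun x y => log (1 + y / x)) 0 x y :=
  ((hasEulerDerivAt_const 1).add (hasEulerDerivAt_snd.div hasEulerDerivAt_fst hx)).clog hslit
    |>.congr_value (by ring)

theorem hasEulerDerivAt_log_mul_add {x y : ℂ} (hslit : y * (x + y) ∈ slitPlane) :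
    HasEulerDerivAt (fun x y => log (y * (x + y))) 2 x y :=
  (hasEulerDerivAt_snd.mul (hasEulerDerivAt_fst.add hasEulerDerivAt_snd)).clog hslit
    |>.congr_value (by rw [← two_mul, mul_div_cancel_right₀ _ (slitPlane_ne_zero hslit)])

theorem hasEulerDerivAt_Qv (p : ℕ) {x y : ℂ} (hx : x ≠ 0) (hslit₁ : 1 + y / x ∈ slitPlane)
    (hslit₂ : y * (x + y) ∈ slitPlane) :
    HasEulerDerivAt (Qv p) (p * Qv p x y + 2 * (y ^ p / p.factorial)) x y := by
  have hfirst := (((hasEulerDerivAt_fst.neg.pow p).div_const (p.factorial : ℂ)).neg).mul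
    (((hasEulerDerivAt_log_one_add_div hx hslit₁).add (hasEulerDerivAt_const (harm p))).sub
      (hasEulerDerivAt_const 1))
  have hsecond := ((hasEulerDerivAt_snd.pow p).div_const (p.factorial : ℂ)).mul
    (((hasEulerDerivAt_log_mul_add hslit₂).sub (hasEulerDerivAt_const (harm p))).sub
      (hasEulerDerivAt_const 1))
  refine (hfirst.add hsecond).congr_value ?_
  rcases p with _ | q
  · simp [Qv]
  · simp only [Qv, Nat.add_sub_cancel]
    ring

theorem euler_identity_Qv_general (p : ℕ) (hp : 1 ≤ p) (l lb : ℂ)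
    (hl : l ≠ 0)
    (hslit1 : 1 + lb / l ∈ Complex.slitPlane)
    (hslit2 : lb * (l + lb) ∈ Complex.slitPlane) :
    l * deriv (fun t => Qv p t lb) l + lb * deriv (fun t => Qv p l t) lb
      = (p : ℂ) * Qv p l lb + 2 * Qu (p - 1) l lb := by
  rw [(hasEulerDerivAt_Qv p hl hslit1 hslit2).deriv_eq, Qu, Nat.sub_add_cancel hp]

/-- The quasi-homogeneity identity
`(λ ∂/∂λ + λ̄ ∂/∂λ̄) Q_{v,p} = p Q_{v,p} + 2 Q_{u,p−1}` for `p ≥ 1`. -/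
theorem euler_identity_Qv (p : ℕ) (hp : 1 ≤ p) (l lb : ℂ)
    (hl : l ≠ 0) (hlb : lb ≠ 0) (hsum : l + lb ≠ 0)
    (hslit1 : 1 + lb / l ∈ Complex.slitPlane)
    (hslit2 : lb * (l + lb) ∈ Complex.slitPlane) :
    l * deriv (fun t => Qv p t lb) l + lb * deriv (fun t => Qv p l t) lb
      = (p : ℂ) * Qv p l lb + 2 * Qu (p - 1) l lb :=
  euler_identity_Qv_general p hp l lb hl hslit1 hslit2
end

section
/- Define F_{−1}(x,x̄) = −e^{−x}(log((x+x̄)/x) + Ein(−x) − 1) − e^{(x̄−x)/2}, where Ein(z) = −Σ_{n≥1}(−z)^n/(n!n). Then F_{−1;x̄} − F_{−1;x} − F_{−1} = −1/x on the domain where x ≠ 0, x+x̄ ≠ 0 and the log branch is defined. -/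
/-- the entire exponential integral `Ein(z) = −Σ_{n≥1} (−z)^n/(n!·n)` -/
noncomputable def Ein (z : ℂ) : ℂ :=
  -∑' n : ℕ, (-z) ^ (n + 1) / ((Nat.factorial (n + 1) : ℂ) * ((n : ℂ) + 1))

/-- `F_{−1}(x,x̄) = −e^{−x}(log((x+x̄)/x) + Ein(−x) − 1) − e^{(x̄−x)/2}` -/
noncomputable def Fm1 (x xb : ℂ) : ℂ :=
  -Complex.exp (-x) * (Complex.log ((x + xb) / x) + Ein (-x) - 1)
    - Complex.exp ((xb - x) / 2)

/-!
Termwise differentiation gives `z · Ein'(z) = 1 − e^{−z}`, so `∂ₓ Ein(−x) = (1 − eˣ)/x`,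
whose `1/x` cancels the `−1/x` of `∂ₓ log((x + x̄)/x)`. Hence
`∂ₓF = −F − e^{−x}/(x + x̄) + 1/x − e^{(x̄−x)/2}/2` and
`∂_x̄F = −e^{−x}/(x + x̄) − e^{(x̄−x)/2}/2`.
-/

open Complex
open scoped Nat

lemma hasSum_pow_succ_div_factorial_succ (z : ℂ) :
    HasSum (fun n : ℕ => z ^ (n + 1) / (n + 1)!) (exp z - 1) := by
  have h := NormedSpace.expSeries_div_hasSum_exp z
  rw [← exp_eq_exp_ℂ, ← hasSum_nat_add_iff' 1] at h
  simpa using h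

lemma mul_tsum_pow_div_factorial_succ (z : ℂ) :
    z * ∑' n : ℕ, z ^ n / (n + 1)! = exp z - 1 := by
  rw [← tsum_mul_left, ← (hasSum_pow_succ_div_factorial_succ z).tsum_eq]
  congr 1 with n
  ring

lemma summable_pow_div_factorial_succ (r : ℝ) :
    Summable (fun n : ℕ => r ^ n / (n + 1)!) := by
  refine (Real.summable_pow_div_factorial |r|).of_norm_bounded fun n => ?_
  rw [norm_div, norm_pow, Real.norm_eq_abs, Real.norm_natCast]
  gcongr
  exact n.le_succ

lemma hasDerivAt_Ein (z : ℂ) : HasDerivAt Ein (∑' n : ℕ, (-z) ^ n / (n + 1)!) z := by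
  set r := ‖z‖ + 1
  have hterm (n : ℕ) (y : ℂ) : HasDerivAt
      (fun t : ℂ => (-t) ^ (n + 1) / ((n + 1)! * ((n : ℂ) + 1)))
      (-((-y) ^ n / (n + 1)!)) y := by
    refine (((hasDerivAt_neg y).fun_pow (n + 1)).div_const _).congr_deriv ?_
    rw [Nat.factorial_succ]
    push_cast
    field_simp
  have hseries := hasDerivAt_tsum_of_isPreconnected (summable_pow_div_factorial_succ r)
    Metric.isOpen_ball (convex_ball (0 : ℂ) r).isPreconnected (fun n y _ => hterm n y) ?_
    (Metric.mem_ball_self (by positivity)) ?_ (y := z) (by simp [r])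
  · have hEin : Ein = -fun z => ∑' n : ℕ, (-z) ^ (n + 1) / ((n + 1)! * ((n : ℂ) + 1)) := rfl
    simpa [hEin, tsum_neg] using hseries.neg
  · intro n y hy
    rw [norm_neg, norm_div, norm_pow, norm_neg, Complex.norm_natCast]
    gcongr
    simpa using (mem_ball_zero_iff.mp hy).le
  · simp

lemma hasDerivAt_Ein_of_ne_zero {z : ℂ} (hz : z ≠ 0) :
    HasDerivAt Ein ((1 - exp (-z)) / z) z := by
  convert hasDerivAt_Ein z using 1
  rw [div_eq_iff hz, ← neg_sub, ← mul_tsum_pow_div_factorial_succ]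
  ring

lemma hasDerivAt_Ein_neg {x : ℂ} (hx : x ≠ 0) :
    HasDerivAt (fun t => Ein (-t)) ((1 - exp x) / x) x := by
  have h := (hasDerivAt_Ein_of_ne_zero (neg_ne_zero.2 hx)).comp x (hasDerivAt_neg x)
  refine h.congr_deriv ?_
  rw [neg_neg, div_neg]
  ring

lemma hasDerivAt_log_add_const_div_self {x c : ℂ} (hx : x ≠ 0) (hc : x + c ≠ 0)
    (hslit : (x + c) / x ∈ slitPlane) :
    HasDerivAt (fun t => log ((t + c) / t)) (1 / (x + c) - 1 / x) x := by
  refine ((hasDerivAt_id' x |>.add_const c).fun_div (hasDerivAt_id' x) hx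
    |>.clog hslit).congr_deriv ?_
  field_simp

lemma hasDerivAt_log_const_add_div_const {x y : ℂ} (hx : x ≠ 0)
    (hslit : (x + y) / x ∈ slitPlane) :
    HasDerivAt (fun t => log ((x + t) / x)) (1 / (x + y)) y := by
  refine ((hasDerivAt_id' y |>.const_add x).div_const x |>.clog hslit).congr_deriv ?_
  field_simp

lemma hasDerivAt_Fm1_snd {x xb : ℂ} (hx : x ≠ 0) (hslit : (x + xb) / x ∈ slitPlane) :
    HasDerivAt (fun y => Fm1 x y) (-exp (-x) / (x + xb) - exp ((xb - x) / 2) / 2) xb := by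
  have hexp := ((hasDerivAt_id' xb |>.sub_const x).div_const 2).cexp
  have hlog := hasDerivAt_log_const_add_div_const hx hslit
  have h := (((hlog.add_const (Ein (-x))).sub_const 1).const_mul (-exp (-x))).sub hexp
  refine h.congr_deriv ?_
  ring

lemma hasDerivAt_Fm1_fst {x xb : ℂ} (hx : x ≠ 0) (hsum : x + xb ≠ 0)
    (hslit : (x + xb) / x ∈ slitPlane) :
    HasDerivAt (fun t => Fm1 t xb)
      (-Fm1 x xb - exp (-x) / (x + xb) + 1 / x - exp ((xb - x) / 2) / 2) x := by
  have hexp := (((hasDerivAt_id' x).const_sub xb).div_const 2).cexp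
  have hlog := hasDerivAt_log_add_const_div_self hx hsum hslit
  have h := ((hasDerivAt_neg' (x := x)).cexp.fun_neg.mul
    ((hlog.add (hasDerivAt_Ein_neg hx)).sub_const 1)).sub hexp
  refine h.congr_deriv ?_
  rw [Pi.add_apply, Fm1, exp_neg]
  field_simp
  ring

/-- The deformed flatness identity `F_{−1;x̄} − F_{−1;x} − F_{−1} = −1/x`
on the domain where `x ≠ 0`, `x + x̄ ≠ 0` and the log branch is defined. -/
theorem flatness_identity_Fm1 (x xb : ℂ) (hx : x ≠ 0) (hsum : x + xb ≠ 0)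
    (hslit : (x + xb) / x ∈ Complex.slitPlane) :
    deriv (fun y => Fm1 x y) xb - deriv (fun t => Fm1 t xb) x - Fm1 x xb = -1 / x := by
  rw [(hasDerivAt_Fm1_snd hx hslit).deriv, (hasDerivAt_Fm1_fst hx hsum hslit).deriv]
  ring
end
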